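/- arXiv:2305.10958 — 6 statements merged into one kernel-verified Lean document; each statement's English description precedes it below -/
import Mathlib

section
/- Let (G, D) be a 3-transposition group with G = ⟨D⟩. For any d ∈ D with d ∉ Z(G), the coset d·Z(G) meets D only in d. -/
/-- Let `(G, D)` be a 3-transposition group with `G = ⟨D⟩`. For any
`d ∈ D` with `d ∉ Z(G)`, the coset `d·Z(G)` meets `D` only in `d`. -/
theorem statement5 (G : Type*) [Group G] (D : Set G)
    (hnormal : ∀ g : G, ∀ d ∈ D, g⁻¹ * d * g ∈ D)
    (hinv : ∀ d ∈ D, d * d = 1 ∧ d ≠ 1)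
    (hgen : Subgroup.closure D = ⊤)
    (h3 : ∀ c ∈ D, ∀ d ∈ D, orderOf (c * d) ∈ ({1, 2, 3} : Set ℕ))
    (d : G) (hd : d ∈ D) (hdz : d ∉ Subgroup.center G) :
    ∀ e ∈ D, (∃ z ∈ Subgroup.center G, e = d * z) → e = d := by
  obtain ⟨hd2, hdne⟩ := hinv d hd
  rintro e he ⟨z, hz, rfl⟩
  have hzc : ∀ g : G, g * z = z * g := fun g => Subgroup.mem_center_iff.mp hz g
  by_contra hne
  have hzne : z ≠ 1 := by rintro rfl; simp at hne
  obtain ⟨he2, -⟩ := hinv (d * z) he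
  have hz2 : z * z = 1 := by
    calc z * z = (d * d) * (z * z) := by rw [hd2, one_mul]
      _ = d * (d * z) * z := by group
      _ = d * (z * d) * z := by rw [hzc d]
      _ = (d * z) * (d * z) := by group
      _ = 1 := he2
  -- find c ∈ D not commuting with d
  have hex : ∃ c ∈ D, c * d ≠ d * c := by
    by_contra h
    push_neg at h
    apply hdz
    rw [Subgroup.mem_center_iff]
    intro g
    have hg : g ∈ Subgroup.closure D := by rw [hgen]; trivial
    induction hg using Subgroup.closure_induction with
    | mem c hc => exact h c hc
    | one => simp
    | mul a b _ _ ha hb => exact (Commute.mul_left ha hb :)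
    | inv a _ ha => exact (Commute.inv_left ha :)
  obtain ⟨c, hc, hccomm⟩ := hex
  obtain ⟨hc2, hcne⟩ := hinv c hc
  have hcinv : c⁻¹ = c := inv_eq_of_mul_eq_one_right hc2
  have hdinv : d⁻¹ = d := inv_eq_of_mul_eq_one_right hd2
  have h1ne : c * d ≠ 1 := by
    intro h
    apply hccomm
    have : c = d := by
      have := congrArg (· * d⁻¹) h
      simpa [mul_assoc, hdinv, hd2] using this
    rw [this]
  have h2ne : (c * d) * (c * d) ≠ 1 := by
    intro h
    apply hccomm
    have : c * d = (c * d)⁻¹ := by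
      rw [eq_inv_iff_mul_eq_one]; exact h
    rw [mul_inv_rev, hcinv, hdinv] at this
    exact this
  have hcd3 : (c * d) ^ 3 = 1 := by
    rcases h3 c hc d hd with h | h | h
    · exact absurd (orderOf_eq_one_iff.mp h) h1ne
    · exfalso; apply h2ne
      have := pow_orderOf_eq_one (c * d)
      rw [h] at this; rwa [pow_two] at this
    · have := pow_orderOf_eq_one (c * d)
      rwa [h] at this
  -- now analyze c * (d * z)
  have hcw : Commute (c * d) z := hzc (c * d)
  have hce : c * (d * z) = (c * d) * z := by rw [mul_assoc]
  rcases h3 c hc (d * z) he with h | h | h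
  · have h1 : c * (d * z) = 1 := orderOf_eq_one_iff.mp h
    rw [hce] at h1
    apply h2ne
    have hzz : c * d = z⁻¹ := eq_inv_of_mul_eq_one_left h1
    have hzinv : z⁻¹ = z := inv_eq_of_mul_eq_one_right hz2
    rw [hzz, hzinv]; exact hz2
  · have h1 := pow_orderOf_eq_one (c * (d * z))
    rw [h, hce, hcw.mul_pow, pow_two, pow_two, hz2, mul_one] at h1
    exact h2ne h1
  · have h1 := pow_orderOf_eq_one (c * (d * z))
    rw [h, hce, hcw.mul_pow, hcd3, one_mul] at h1
    apply hzne
    calc z = z ^ 3 := by rw [pow_succ, pow_two, hz2, one_mul]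
      _ = 1 := h1
end

section
/- Let F be a field of characteristic 0, η ∈ F \ {0,1}, and (G, D) a finite connected 3-transposition group such that the product of every two distinct elements of D has order 3. If η = 2 then, in the Matsuo algebra M = M_η(G,D), the element c - d belongs to the radical M^⊥ of the Frobenius form for all c, d ∈ D; consequently M/M^⊥ is one-dimensional. -/
/-- Let `F` be a field of characteristic `0`, `η ∈ F \ {0,1}`, and `(G, D)`
a finite connected 3-transposition group (`D` a single conjugacy class) such that the
product of every two distinct elements of `D` has order `3`. If `η = 2` then, in the
Matsuo algebra `M = M_η(G,D)` (spanned by `D`, with the Matsuo product and the Frobenius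
form `B` with `B(c,c) = 1`, `B(c,d) = 0` if `|cd| = 2`, `B(c,d) = η/2` if `|cd| = 3`),
the element `c - d` belongs to the radical `M^⊥` of the Frobenius form for all
`c, d ∈ D`; consequently `M/M^⊥` is one-dimensional. -/
theorem statement7 (F : Type*) [Field F] [CharZero F]
    (η : F) (hη0 : η ≠ 0) (hη1 : η ≠ 1) (hη2 : η = 2)
    (G : Type*) [Group G] (D : Set G)
    (hDfin : D.Finite) (hDne : D.Nonempty)
    (hnormal : ∀ g : G, ∀ d ∈ D, g⁻¹ * d * g ∈ D)
    (hinv : ∀ d ∈ D, d * d = 1 ∧ d ≠ 1)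
    (hgen : Subgroup.closure D = ⊤)
    (hconn : ∀ c ∈ D, ∀ d ∈ D, ∃ g : G, g⁻¹ * c * g = d)
    (hall3 : ∀ c ∈ D, ∀ d ∈ D, c ≠ d → orderOf (c * d) = 3)
    (M : Type*) [NonUnitalNonAssocCommRing M] [Module F M]
    (ι : G → M)
    (hspan : Submodule.span F (ι '' D) = ⊤)
    (hidem : ∀ c ∈ D, ι c * ι c = ι c)
    (hord2 : ∀ c ∈ D, ∀ d ∈ D, orderOf (c * d) = 2 → ι c * ι d = 0)
    (hord3 : ∀ c ∈ D, ∀ d ∈ D, orderOf (c * d) = 3 →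
        ι c * ι d = (η / 2) • (ι c + ι d - ι (d⁻¹ * c * d)))
    (B : M →ₗ[F] M →ₗ[F] F)
    (hB1 : ∀ c ∈ D, B (ι c) (ι c) = 1)
    (hB2 : ∀ c ∈ D, ∀ d ∈ D, orderOf (c * d) = 2 → B (ι c) (ι d) = 0)
    (hB3 : ∀ c ∈ D, ∀ d ∈ D, orderOf (c * d) = 3 → B (ι c) (ι d) = η / 2) :
    (∀ c ∈ D, ∀ d ∈ D, ∀ v : M, B (ι c - ι d) v = 0) ∧
      Module.finrank F (M ⧸ LinearMap.ker B) = 1 := by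

  -- B(ι c)(ι e) = 1 for all c, e ∈ D
  have hBall : ∀ c ∈ D, ∀ e ∈ D, B (ι c) (ι e) = 1 := by
    intro c hc e he
    by_cases h : c = e
    · subst h; exact hB1 c hc
    · rw [hB3 c hc e he (hall3 c hc e he h), hη2]; norm_num
  -- all functionals B (ι c) agree
  have hBeq : ∀ c ∈ D, ∀ d ∈ D, B (ι c) = B (ι d) := by
    intro c hc d hd
    apply LinearMap.ext_on hspan
    rintro _ ⟨e, he, rfl⟩
    rw [hBall c hc e he, hBall d hd e he]
  have part1 : ∀ c ∈ D, ∀ d ∈ D, ∀ v : M, B (ι c - ι d) v = 0 := by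
    intro c hc d hd v
    rw [map_sub, LinearMap.sub_apply, hBeq c hc d hd, sub_self]
  refine ⟨part1, ?_⟩
  obtain ⟨c₀, hc₀⟩ := hDne
  have hrange : LinearMap.range B = Submodule.span F {B (ι c₀)} := by
    rw [LinearMap.range_eq_map, ← hspan, Submodule.map_span]
    congr 1
    apply Set.Subset.antisymm
    · rintro _ ⟨_, ⟨e, he, rfl⟩, rfl⟩
      exact Set.mem_singleton_iff.mpr (hBeq e he c₀ hc₀)
    · rintro _ rfl
      exact ⟨ι c₀, ⟨c₀, hc₀, rfl⟩, rfl⟩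
  have hne : B (ι c₀) ≠ 0 := by
    intro h
    have := hB1 c₀ hc₀
    rw [h] at this
    simp at this
  have := LinearEquiv.finrank_eq B.quotKerEquivRange
  rw [this, hrange, finrank_span_singleton hne]
end

section
/- Let T be a group in which every element has order 1, 2, or 3, let G = T wr Sym(n) with base group B = Tⁿ, and let d be a transposition in the complementary copy of Sym(n). Then the conjugacy class d^G is a set of 3-transpositions in G. -/
/-- The action of `Sym(n)` on the base group `Tⁿ` by permuting coordinates. -/
def permMulAut (T : Type*) [Group T] (n : ℕ) :
    Equiv.Perm (Fin n) →* MulAut (Fin n → T) where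
  toFun σ :=
    { toFun := fun f => f ∘ σ.symm
      invFun := fun f => f ∘ σ
      left_inv := fun f => by funext i; simp
      right_inv := fun f => by funext i; simp
      map_mul' := fun f g => rfl }
  map_one' := by
    apply MulEquiv.ext; intro f; funext i; rfl
  map_mul' := fun σ τ => by
    apply MulEquiv.ext; intro f; funext i; rfl

/-- The wreath product `T wr Sym(n)`: the semidirect product of the base group
`B = Tⁿ` by `Sym(n)` acting by permuting coordinates. -/
abbrev WreathProduct (T : Type*) [Group T] (n : ℕ) :=
  SemidirectProduct (Fin n → T) (Equiv.Perm (Fin n)) (permMulAut T n)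

lemma permMulAut_apply {T : Type*} [Group T] {n : ℕ} (σ : Equiv.Perm (Fin n))
    (f : Fin n → T) (k : Fin n) : permMulAut T n σ f k = f (σ⁻¹ k) := rfl

/-- Standard form of a conjugate of the distinguished transposition. -/
def stdForm {T : Type*} [Group T] {n : ℕ} (a b : Fin n) (u : T) : WreathProduct T n :=
  ⟨fun k => if k = a then u else if k = b then u⁻¹ else 1, Equiv.swap a b⟩

lemma conj_form {T : Type*} [Group T] {n : ℕ} {i j : Fin n} (hij : i ≠ j)
    {x : WreathProduct T n}
    (hx : IsConj (SemidirectProduct.inr (Equiv.swap i j) : WreathProduct T n) x) :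
    ∃ (a b : Fin n) (u : T), a ≠ b ∧ x = stdForm a b u := by
  obtain ⟨c, hc⟩ := isConj_iff.1 hx
  refine ⟨c.right i, c.right j, c.left (c.right i) * (c.left (c.right j))⁻¹,
    fun h => hij (c.right.injective h), ?_⟩
  have hswap : c.right * Equiv.swap i j * c.right⁻¹ = Equiv.swap (c.right i) (c.right j) :=
    (Equiv.swap_apply_apply c.right i j).symm
  have key : ∀ k, c.right (Equiv.swap i j (c.right⁻¹ k)) = Equiv.swap (c.right i) (c.right j) k := by
    intro k
    rw [← hswap]
    simp [Equiv.Perm.mul_apply]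
  subst hc
  ext k
  · simp only [SemidirectProduct.mul_left, SemidirectProduct.mul_right,
      SemidirectProduct.inv_left, SemidirectProduct.inv_right, SemidirectProduct.left_inr,
      SemidirectProduct.right_inr, map_one, mul_one, one_mul, Pi.mul_apply, Pi.inv_apply,
      permMulAut_apply, mul_inv_rev, inv_inv, Equiv.Perm.mul_apply, Equiv.Perm.inv_def,
      Equiv.symm_swap]
    rw [show Equiv.swap i j (c.right.symm k) = c.right.symm (Equiv.swap (c.right i) (c.right j) k) by
      rw [← key k]; simp [Equiv.Perm.inv_def]]
    simp only [Equiv.apply_symm_apply, stdForm]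
    rcases eq_or_ne k (c.right i) with h1 | h1
    · subst h1; simp [Equiv.swap_apply_left]
    · rcases eq_or_ne k (c.right j) with h2 | h2
      · subst h2; simp [Equiv.swap_apply_right, h1]
      · simp [Equiv.swap_apply_of_ne_of_ne h1 h2, h1, h2]
  · exact congrArg Fin.val (key k)

lemma stdForm_comm {T : Type*} [Group T] {n : ℕ} {a b : Fin n} (hab : a ≠ b) (u : T) :
    stdForm a b u = stdForm b a u⁻¹ := by
  refine SemidirectProduct.ext ?_ (Equiv.swap_comm a b)
  funext k
  simp only [stdForm, inv_inv]
  split_ifs with h1 h2 <;> simp_all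

lemma stdForm_sq {T : Type*} [Group T] {n : ℕ} {a b : Fin n} (hab : a ≠ b) (u : T) :
    stdForm a b u * stdForm a b u = 1 := by
  refine SemidirectProduct.ext ?_ (Equiv.swap_mul_self a b)
  funext k
  simp only [SemidirectProduct.mul_left, Pi.mul_apply, permMulAut_apply, stdForm,
    SemidirectProduct.one_left, Pi.one_apply, Equiv.Perm.inv_def, Equiv.symm_swap,
    Equiv.swap_apply_def]
  split_ifs <;> simp_all [Ne.symm hab]

lemma stdForm_ne_one {T : Type*} [Group T] {n : ℕ} {a b : Fin n} (hab : a ≠ b) (u : T) :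
    stdForm a b u ≠ 1 := by
  intro h
  have : (stdForm a b u).right = (1 : WreathProduct T n).right := by rw [h]
  simp only [stdForm, SemidirectProduct.one_right] at this
  exact hab (Equiv.swap_eq_one_iff.1 this)

/-- The same-transposition case: the product lies in the base group. -/
lemma stdForm_same {T : Type*} [Group T] {n : ℕ} {a b : Fin n} (hab : a ≠ b) (u v : T) :
    stdForm a b u * stdForm a b v =
      SemidirectProduct.inl (fun k => if k = a then u * v⁻¹ else if k = b then u⁻¹ * v else 1) := by
  refine SemidirectProduct.ext ?_ ?_
  · funext k
    simp only [SemidirectProduct.mul_left, Pi.mul_apply, permMulAut_apply, stdForm,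
      SemidirectProduct.left_inl, Equiv.Perm.inv_def, Equiv.symm_swap, Equiv.swap_apply_def]
    split_ifs <;> simp_all [Ne.symm hab]
  · show Equiv.swap a b * Equiv.swap a b = 1
    exact Equiv.swap_mul_self a b

lemma stdForm_same_pow {T : Type*} [Group T]
    (hT : ∀ t : T, orderOf t ∈ ({1, 2, 3} : Set ℕ)) {n : ℕ} {a b : Fin n} (hab : a ≠ b)
    (u v : T) : ∃ m ∈ ({1, 2, 3} : Set ℕ), (stdForm a b u * stdForm a b v) ^ m = 1 := by
  refine ⟨orderOf (u * v⁻¹), hT _, ?_⟩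
  set m := orderOf (u * v⁻¹) with hm
  rw [stdForm_same hab, ← map_pow]
  have ht : (fun k => if k = a then u * v⁻¹ else if k = b then u⁻¹ * v else 1) ^ m
      = (1 : Fin n → T) := by
    funext k
    simp only [Pi.pow_apply, Pi.one_apply]
    split_ifs with h1 h2
    · exact pow_orderOf_eq_one _
    · have hc : u⁻¹ * v = (v⁻¹ * (u * v⁻¹) * v⁻¹⁻¹)⁻¹ := by group
      rw [hc, inv_pow, conj_pow, pow_orderOf_eq_one, mul_one, inv_inv, inv_mul_cancel, inv_one]
    · exact one_pow m
  rw [ht, map_one]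

set_option maxHeartbeats 4000000 in
/-- The shared-point case: the product has order dividing 3. -/
lemma stdForm_shared_pow {T : Type*} [Group T] {n : ℕ} {p b e : Fin n} (u v : T)
    (hpb : p ≠ b) (hpe : p ≠ e) (hbe : b ≠ e) :
    (stdForm p b u * stdForm p e v) ^ 3 = 1 := by
  rw [pow_succ, pow_two]
  refine SemidirectProduct.ext ?_ ?_
  · funext k
    simp only [SemidirectProduct.mul_left, SemidirectProduct.mul_right, Pi.mul_apply,
      permMulAut_apply, stdForm, SemidirectProduct.one_left, Pi.one_apply,
      Equiv.Perm.inv_def, Equiv.symm_swap, map_mul, Equiv.Perm.mul_apply,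
      Equiv.swap_apply_def]
    split_ifs <;>
      simp_all [permMulAut_apply, Equiv.Perm.inv_def, Equiv.symm_swap, Equiv.swap_apply_def,
        Ne.symm hpb, Ne.symm hpe, Ne.symm hbe] <;> group
  · show Equiv.swap p b * Equiv.swap p e * (Equiv.swap p b * Equiv.swap p e) *
      (Equiv.swap p b * Equiv.swap p e) = 1
    ext q
    rcases eq_or_ne q p with rfl | h1 <;>
    [skip; rcases eq_or_ne q b with rfl | h2] <;>
    [skip; skip; rcases eq_or_ne q e with rfl | h3] <;>
    simp [Equiv.Perm.mul_apply, Equiv.swap_apply_left, Equiv.swap_apply_right,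
      Equiv.swap_apply_of_ne_of_ne, hpb, hpe, hbe, Ne.symm hpb, Ne.symm hpe, Ne.symm hbe, *]

set_option maxHeartbeats 4000000 in
/-- The disjoint case: the product has order dividing 2. -/
lemma stdForm_disjoint_pow {T : Type*} [Group T] {n : ℕ} {a b c e : Fin n} (u v : T)
    (hab : a ≠ b) (hce : c ≠ e) (hac : a ≠ c) (hae : a ≠ e) (hbc : b ≠ c) (hbe : b ≠ e) :
    (stdForm a b u * stdForm c e v) ^ 2 = 1 := by
  rw [pow_two]
  refine SemidirectProduct.ext ?_ ?_
  · funext k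
    simp only [SemidirectProduct.mul_left, SemidirectProduct.mul_right, Pi.mul_apply,
      permMulAut_apply, stdForm, SemidirectProduct.one_left, Pi.one_apply,
      Equiv.Perm.inv_def, Equiv.symm_swap, map_mul, Equiv.Perm.mul_apply,
      Equiv.swap_apply_def]
    split_ifs <;>
      simp_all [permMulAut_apply, Equiv.Perm.inv_def, Equiv.symm_swap, Equiv.swap_apply_def,
        Ne.symm hab, Ne.symm hce, Ne.symm hac, Ne.symm hae, Ne.symm hbc, Ne.symm hbe]
  · show Equiv.swap a b * Equiv.swap c e * (Equiv.swap a b * Equiv.swap c e) = 1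
    ext q
    rcases eq_or_ne q a with rfl | h1 <;>
    [skip; rcases eq_or_ne q b with rfl | h2] <;>
    [skip; skip; rcases eq_or_ne q c with rfl | h3] <;>
    [skip; skip; skip; rcases eq_or_ne q e with rfl | h4] <;>
    simp [Equiv.Perm.mul_apply, Equiv.swap_apply_left, Equiv.swap_apply_right,
      Equiv.swap_apply_of_ne_of_ne, hab, hce, hac, hae, hbc, hbe,
      Ne.symm hab, Ne.symm hce, Ne.symm hac, Ne.symm hae, Ne.symm hbc, Ne.symm hbe, *]

/-- Key lemma: the product of two standard-form elements has a trivial small power. -/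
lemma stdForm_mul_pow {T : Type*} [Group T]
    (hT : ∀ t : T, orderOf t ∈ ({1, 2, 3} : Set ℕ)) {n : ℕ} {a b c e : Fin n}
    (hab : a ≠ b) (hce : c ≠ e) (u v : T) :
    ∃ m ∈ ({1, 2, 3} : Set ℕ), (stdForm a b u * stdForm c e v) ^ m = 1 := by
  by_cases hac : a = c
  · subst hac
    by_cases hbe : b = e
    · subst hbe
      exact stdForm_same_pow hT hab u v
    · exact ⟨3, by norm_num, stdForm_shared_pow u v hab hce hbe⟩
  · by_cases hae : a = e
    · subst hae
      rw [stdForm_comm hce v]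
      by_cases hbc : b = c
      · subst hbc
        exact stdForm_same_pow hT hab u v⁻¹
      · exact ⟨3, by norm_num, stdForm_shared_pow u v⁻¹ hab hac hbc⟩
    · by_cases hbc : b = c
      · subst hbc
        rw [stdForm_comm hab u]
        by_cases hbe : b = e
        · exact absurd hbe hce
        · exact ⟨3, by norm_num, stdForm_shared_pow u⁻¹ v (Ne.symm hab) hce hae⟩
      · by_cases hbe : b = e
        · subst hbe
          rw [stdForm_comm hab u, stdForm_comm hce v]
          exact ⟨3, by norm_num, stdForm_shared_pow u⁻¹ v⁻¹ (Ne.symm hab) hbc hac⟩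
        · exact ⟨2, by norm_num, stdForm_disjoint_pow u v hab hce hac hae hbc hbe⟩

/-- Let `T` be a group in which every element has order 1, 2, or 3, let
`G = T wr Sym(n)` and let `d` be a transposition in the complementary copy of `Sym(n)`.
Then the conjugacy class `d^G` is a set of 3-transpositions in `G`: it is closed under
conjugation, consists of involutions, and the order of the product of any two of its
elements is 1, 2, or 3. -/
theorem statement9 (T : Type*) [Group T]
    (hT : ∀ t : T, orderOf t ∈ ({1, 2, 3} : Set ℕ))
    (n : ℕ) (i j : Fin n) (hij : i ≠ j)
    (d : WreathProduct T n) (hd : d = SemidirectProduct.inr (Equiv.swap i j)) :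
    (∀ g x : WreathProduct T n, IsConj d x → IsConj d (g⁻¹ * x * g)) ∧
    (∀ x : WreathProduct T n, IsConj d x → x * x = 1 ∧ x ≠ 1) ∧
    (∀ x y : WreathProduct T n, IsConj d x → IsConj d y →
      orderOf (x * y) ∈ ({1, 2, 3} : Set ℕ)) := by
  subst hd
  refine ⟨?_, ?_, ?_⟩
  · intro g x hx
    exact hx.trans (isConj_iff.2 ⟨g⁻¹, by group⟩)
  · intro x hx
    obtain ⟨a, b, u, hab, rfl⟩ := conj_form hij hx
    exact ⟨stdForm_sq hab u, stdForm_ne_one hab u⟩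
  · intro x y hx hy
    obtain ⟨a, b, u, hab, rfl⟩ := conj_form hij hx
    obtain ⟨c, e, v, hce, rfl⟩ := conj_form hij hy
    obtain ⟨m, hm, hpow⟩ := stdForm_mul_pow hT hab hce u v
    have hdvd : orderOf (stdForm a b u * stdForm c e v) ∣ m := orderOf_dvd_of_pow_eq_one hpow
    simp only [Set.mem_insert_iff, Set.mem_singleton_iff] at hm ⊢
    rcases hm with rfl | rfl | rfl
    · left; exact Nat.eq_one_of_dvd_one hdvd
    · rcases (Nat.prime_two.eq_one_or_self_of_dvd _ hdvd) with h | h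
      · exact Or.inl h
      · exact Or.inr (Or.inl h)
    · rcases (Nat.prime_three.eq_one_or_self_of_dvd _ hdvd) with h | h
      · exact Or.inl h
      · exact Or.inr (Or.inr h)
end

section
/- Let T be a group, G = T wr Sym(n), and d a transposition of the complement Sym(n). Then the conjugacy class d^G consists exactly of the elements t_i t_j^{-1} (i,j), where t ∈ T, 1 ≤ i < j ≤ n, t_i denotes the element of the base group Tⁿ with t in coordinate i and identity elsewhere, and (i,j) ∈ Sym(n) is a transposition. -/
open SemidirectProduct Equiv

lemma key (T : Type*) [Group T] (n : ℕ) (a b : Fin n) (hab : a ≠ b)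
    (f : Fin n → T) (σ : Equiv.Perm (Fin n)) :
    (inl f * inr σ : WreathProduct T n) * inr (Equiv.swap a b) * (inl f * inr σ)⁻¹ =
      inl (Pi.mulSingle (σ a) (f (σ a) * (f (σ b))⁻¹) *
            Pi.mulSingle (σ b) (f (σ a) * (f (σ b))⁻¹)⁻¹) *
        inr (Equiv.swap (σ a) (σ b)) := by
  have hss : Equiv.swap (σ a) (σ b) = σ * Equiv.swap a b * σ⁻¹ := Equiv.swap_apply_apply σ a b
  have hab' : σ a ≠ σ b := fun h => hab (σ.injective h)
  ext
  · rename_i x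
    simp only [mul_left, inv_left, mul_right, inv_right, left_inl, right_inl, left_inr, right_inr,
      map_one, mul_one, one_mul, MulEquiv.map_inv, inv_inv]
    simp only [Pi.mul_apply, Pi.inv_apply]
    have h1 : (((permMulAut T n) (σ * Equiv.swap a b)) (((permMulAut T n) σ⁻¹) f)) x =
        f (Equiv.swap (σ a) (σ b) x) := by rw [hss]; rfl
    rw [h1]
    rcases eq_or_ne x (σ a) with rfl | hia
    · simp [Pi.mulSingle_apply, hab', Equiv.swap_apply_left]
    · rcases eq_or_ne x (σ b) with rfl | hjb
      · simp [Pi.mulSingle_apply, hab'.symm, Equiv.swap_apply_right]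
      · simp [Pi.mulSingle_apply, hia, hjb, Equiv.swap_apply_of_ne_of_ne hia hjb]
  · simp [mul_right, inv_right, hss, mul_assoc]


/-- Let `T` be a group, `G = T wr Sym(n)`, and `d` a transposition of the
complement `Sym(n)`. Then the conjugacy class `d^G` consists exactly of the elements
`t_i t_j⁻¹ (i,j)` for `t ∈ T` and distinct indices `i, j`, where `t_i` is the element
of the base group `Tⁿ` with `t` in coordinate `i` and identity elsewhere, and `(i,j)`
is a transposition of `Sym(n)`. -/
theorem statement10 (T : Type*) [Group T] (n : ℕ)
    (a b : Fin n) (hab : a ≠ b)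
    (d : WreathProduct T n) (hd : d = SemidirectProduct.inr (Equiv.swap a b)) :
    {x : WreathProduct T n | IsConj d x} =
      {x : WreathProduct T n | ∃ (t : T) (i j : Fin n), i ≠ j ∧
        x = SemidirectProduct.inl (Pi.mulSingle i t * Pi.mulSingle j t⁻¹) *
              SemidirectProduct.inr (Equiv.swap i j)} := by
  subst hd
  ext x
  simp only [Set.mem_setOf_eq, isConj_iff]
  constructor
  · rintro ⟨c, rfl⟩
    refine ⟨c.left (c.right a) * (c.left (c.right b))⁻¹, c.right a, c.right b,
      fun h => hab (c.right.injective h), ?_⟩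
    conv_lhs => rw [← inl_left_mul_inr_right c]
    exact key T n a b hab c.left c.right
  · rintro ⟨t, i, j, hij, rfl⟩
    obtain ⟨σ, ha', hb'⟩ : ∃ σ : Equiv.Perm (Fin n), σ a = i ∧ σ b = j := by
      refine ⟨Equiv.swap (Equiv.swap a i b) j * Equiv.swap a i, ?_, ?_⟩
      · have h1 : Equiv.swap a i b ≠ i := by
          rcases eq_or_ne b i with rfl | h
          · simpa [Equiv.swap_apply_right] using hab
          · rcases eq_or_ne b a with rfl | h2
            · exact absurd rfl hab
            · rwa [Equiv.swap_apply_of_ne_of_ne h2 h]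
        simp only [Equiv.Perm.mul_apply, Equiv.swap_apply_left]
        exact Equiv.swap_apply_of_ne_of_ne (Ne.symm h1) hij
      · simp [Equiv.Perm.mul_apply, Equiv.swap_apply_left]
    refine ⟨inl (Pi.mulSingle i t) * inr σ, ?_⟩
    have hk := key T n a b hab (Pi.mulSingle i t) σ
    rw [ha', hb'] at hk
    rw [hk]
    congr 2
    all_goals simp [Pi.mulSingle_eq_same, Pi.mulSingle_eq_of_ne (Ne.symm hij)]
end

section
/- Let n ≥ 4 and consider the 3-transposition group Wr(2,n) = U : Sym(n), where U is the sum-zero submodule of the n-dimensional permutation module over F₂, with 3-transposition class D = {b_{i,j} = (i,j)} ∪ {c_{i,j} = (e_i+e_j)(i,j)} for 1 ≤ i < j ≤ n. Then for distinct i, j, k, l with i minimal, the element r(i,j)(k,l) = b_{i,j} - b_{i,l} - b_{j,k} + b_{k,l} + c_{i,j} - c_{i,l} - c_{j,k} + c_{k,l} of the Matsuo algebra M_{1/2}(Wr(2,n), D) lies in the radical of the Frobenius form. -/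
/-- The wreath product `2 wr Sym(n)`; the group `Wr(2,n) = U : Sym(n)` is the subgroup
generated by the 3-transposition class `D` below. -/
abbrev Wreath2 (n : ℕ) :=
  SemidirectProduct (Fin n → Multiplicative (ZMod 2)) (Equiv.Perm (Fin n))
    (permMulAut (Multiplicative (ZMod 2)) n)

/-- The point `b_{i,j} = (i,j)` of the Fischer space of `Wr(2,n)`. -/
def bPoint (n : ℕ) (i j : Fin n) : Wreath2 n :=
  SemidirectProduct.inr (Equiv.swap i j)

/-- The point `c_{i,j} = (e_i + e_j)(i,j)` of the Fischer space of `Wr(2,n)`. -/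
def cPoint (n : ℕ) (i j : Fin n) : Wreath2 n :=
  SemidirectProduct.inl
      (Pi.mulSingle i (Multiplicative.ofAdd (1 : ZMod 2)) *
        Pi.mulSingle j (Multiplicative.ofAdd (1 : ZMod 2))) *
    SemidirectProduct.inr (Equiv.swap i j)

/-- The 3-transposition class `D` of `Wr(2,n)`. -/
def DWr2 (n : ℕ) : Set (Wreath2 n) :=
  {w | ∃ i j : Fin n, i ≠ j ∧ (w = bPoint n i j ∨ w = cPoint n i j)}

-- Auxiliary lemmas
variable {n : ℕ}

lemma permMulAut_apply_s13 (σ : Equiv.Perm (Fin n)) (f : Fin n → Multiplicative (ZMod 2)) :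
    permMulAut (Multiplicative (ZMod 2)) n σ f = f ∘ σ.symm := rfl

-- abbreviation for the generator
def eP (a : Fin n) : Fin n → Multiplicative (ZMod 2) :=
  Pi.mulSingle a (Multiplicative.ofAdd (1 : ZMod 2))

lemma permMulAut_eP (σ : Equiv.Perm (Fin n)) (a : Fin n) :
    permMulAut (Multiplicative (ZMod 2)) n σ (eP a) = eP (σ a) := by
  funext x
  simp [permMulAut_apply_s13, eP, Pi.mulSingle_apply, Equiv.symm_apply_eq]

lemma bPoint_left (a b : Fin n) : (bPoint n a b).left = 1 := rfl
lemma bPoint_right (a b : Fin n) : (bPoint n a b).right = Equiv.swap a b := rfl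
lemma cPoint_left (a b : Fin n) : (cPoint n a b).left = eP a * eP b := by
  simp [cPoint, eP]
lemma cPoint_right (a b : Fin n) : (cPoint n a b).right = Equiv.swap a b := by
  simp [cPoint]

lemma sq1 (f : Fin n → Multiplicative (ZMod 2)) : f * f = 1 := by
  funext x; exact (by decide : ∀ z : Multiplicative (ZMod 2), z * z = 1) (f x)

lemma sq1' (f g : Fin n → Multiplicative (ZMod 2)) : f * (f * g) = g := by
  rw [← mul_assoc, sq1, one_mul]

lemma bPoint_symm (a b : Fin n) : bPoint n a b = bPoint n b a := by
  simp [bPoint, Equiv.swap_comm]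

lemma cPoint_symm (a b : Fin n) : cPoint n a b = cPoint n b a := by
  simp [cPoint, Equiv.swap_comm, mul_comm]

lemma order2' (x : Wreath2 n) (h : x * x = 1) (h1 : x ≠ 1) : orderOf x = 2 :=
  orderOf_eq_prime (by rwa [pow_two]) h1

lemma order3' (x : Wreath2 n) (h : x * x * x = 1) (h1 : x ≠ 1) : orderOf x = 3 :=
  orderOf_eq_prime (by rwa [pow_succ, pow_two]) h1

lemma ne_one_right (x : Wreath2 n) (h : x.right ≠ 1) : x ≠ 1 := by
  intro he; exact h (by rw [he]; rfl)

lemma ne_one_left (x : Wreath2 n) (h : x.left ≠ 1) : x ≠ 1 := by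
  intro he; exact h (by rw [he]; rfl)

lemma eP_mul_eP_ne_one {a b : Fin n} (hab : a ≠ b) : eP a * eP b ≠ (1 : Fin n → Multiplicative (ZMod 2)) := by
  intro h
  have := congrFun h a
  simp [eP, Pi.mulSingle_apply, hab, Ne.symm hab] at this

lemma swap_ne_one {a b : Fin n} (hab : a ≠ b) : Equiv.swap a b ≠ 1 := by
  intro h
  have := congrFun (congrArg (fun e => e.toFun) h) a
  simp [Equiv.swap_apply_left] at this
  exact hab this.symm

-- order 2, same pair, different types
lemma orderOf_bc_same (a b : Fin n) (hab : a ≠ b) :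
    orderOf (bPoint n a b * cPoint n a b) = 2 := by
  have hprod : bPoint n a b * cPoint n a b = SemidirectProduct.inl (eP b * eP a) := by
    ext <;>
      simp [bPoint_left, cPoint_left, cPoint_right, mul_assoc, permMulAut_eP, map_mul,
        bPoint_right, Equiv.swap_apply_left, Equiv.swap_apply_right]
  rw [hprod]
  apply order2'
  · rw [← map_mul, sq1]; rfl
  · apply ne_one_left
    simpa using eP_mul_eP_ne_one (Ne.symm hab)

lemma orderOf_cb_same (a b : Fin n) (hab : a ≠ b) :
    orderOf (cPoint n a b * bPoint n a b) = 2 := by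
  have hprod : cPoint n a b * bPoint n a b = SemidirectProduct.inl (eP a * eP b) := by
    ext <;>
      simp [bPoint_left, cPoint_left, cPoint_right, mul_assoc, permMulAut_eP, map_mul,
        bPoint_right, Equiv.swap_apply_left, Equiv.swap_apply_right]
  rw [hprod]
  apply order2'
  · rw [← map_mul, sq1]; rfl
  · exact ne_one_left _ (by simpa using eP_mul_eP_ne_one hab)

lemma swap3 (s x y : Fin n) (hsx : s ≠ x) (hsy : s ≠ y) (hxy : x ≠ y) :
    (Equiv.swap s x * Equiv.swap s y) * (Equiv.swap s x * Equiv.swap s y) *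
      (Equiv.swap s x * Equiv.swap s y) = 1 := by
  have h := (Equiv.Perm.isThreeCycle_swap_mul_swap_same hsx hsy hxy).orderOf
  have := pow_orderOf_eq_one (Equiv.swap s x * Equiv.swap s y)
  rw [h, pow_succ, pow_two] at this
  exact this

lemma orderOf_bb_share (s x y : Fin n) (hsx : s ≠ x) (hsy : s ≠ y) (hxy : x ≠ y) :
    orderOf (bPoint n s x * bPoint n s y) = 3 := by
  have : bPoint n s x * bPoint n s y
      = SemidirectProduct.inr (Equiv.swap s x * Equiv.swap s y) := by
    ext <;> simp [bPoint, map_one]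
  rw [this, orderOf_injective SemidirectProduct.inr SemidirectProduct.inr_injective]
  exact (Equiv.Perm.isThreeCycle_swap_mul_swap_same hsx hsy hxy).orderOf

lemma swap_mul_swap_ne_one {s x y : Fin n} (hsx : s ≠ x) (hsy : s ≠ y) (hxy : x ≠ y) :
    Equiv.swap s x * Equiv.swap s y ≠ 1 := by
  intro h
  have h3 := (Equiv.Perm.isThreeCycle_swap_mul_swap_same hsx hsy hxy).orderOf
  rw [h, orderOf_one] at h3
  norm_num at h3


lemma cube (f : Fin n → Multiplicative (ZMod 2)) (σ : Equiv.Perm (Fin n))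
    (hσ : σ * σ * σ = 1)
    (hf : f * permMulAut (Multiplicative (ZMod 2)) n σ f *
      permMulAut (Multiplicative (ZMod 2)) n σ
        (permMulAut (Multiplicative (ZMod 2)) n σ f) = 1) :
    (⟨f, σ⟩ : Wreath2 n) * ⟨f, σ⟩ * ⟨f, σ⟩ = 1 := by
  have h : (⟨f, σ⟩ : Wreath2 n) * ⟨f, σ⟩ * ⟨f, σ⟩
      = ⟨f * permMulAut (Multiplicative (ZMod 2)) n σ f *
          permMulAut (Multiplicative (ZMod 2)) n (σ * σ) f, σ * σ * σ⟩ := rfl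
  rw [h, hσ, map_mul, MulAut.mul_apply, hf]
  rfl

lemma cancel3 (f g h : Fin n → Multiplicative (ZMod 2)) : (f*g)*(g*h)*(h*f) = 1 := by
  rw [mul_assoc f g (g*h), sq1' g, mul_assoc f h (h*f), sq1' h, sq1 f]

lemma sw_s (s x y : Fin n) (hsx : s ≠ x) (hsy : s ≠ y) (hxy : x ≠ y) :
    (Equiv.swap s x * Equiv.swap s y) s = y := by
  simp [Equiv.Perm.mul_apply, Equiv.swap_apply_left,
    Equiv.swap_apply_of_ne_of_ne (Ne.symm hsy) (Ne.symm hxy)]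

lemma sw_x (s x y : Fin n) (hsx : s ≠ x) (hsy : s ≠ y) (hxy : x ≠ y) :
    (Equiv.swap s x * Equiv.swap s y) x = s := by
  simp [Equiv.Perm.mul_apply, Equiv.swap_apply_right,
    Equiv.swap_apply_of_ne_of_ne (Ne.symm hsx) hxy]

lemma sw_y (s x y : Fin n) (hsx : s ≠ x) (hsy : s ≠ y) (hxy : x ≠ y) :
    (Equiv.swap s x * Equiv.swap s y) y = x := by
  simp [Equiv.Perm.mul_apply, Equiv.swap_apply_right, Equiv.swap_apply_left]

lemma orderOf_bc_share (s x y : Fin n) (hsx : s ≠ x) (hsy : s ≠ y) (hxy : x ≠ y) :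
    orderOf (bPoint n s x * cPoint n s y) = 3 := by
  have hprod : bPoint n s x * cPoint n s y
      = (⟨eP x * eP y, Equiv.swap s x * Equiv.swap s y⟩ : Wreath2 n) := by
    ext
    · simp only [SemidirectProduct.mul_left, bPoint_left, bPoint_right, cPoint_left, map_mul,
        permMulAut_eP, one_mul, Equiv.swap_apply_left,
        Equiv.swap_apply_of_ne_of_ne (Ne.symm hsy) (Ne.symm hxy)]
    · simp [bPoint_right, cPoint_right]
  rw [hprod]
  apply order3'
  · apply cube
    · exact swap3 s x y hsx hsy hxy
    · simp only [map_mul, MulAut.mul_apply, permMulAut_eP, Equiv.swap_apply_left,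
        Equiv.swap_apply_right, Equiv.swap_apply_of_ne_of_ne (Ne.symm hsy) (Ne.symm hxy),
        Equiv.swap_apply_of_ne_of_ne (Ne.symm hsx) hxy]
      -- (eP x * eP y) * (eP s * eP x) * (eP y * eP s) = 1
      rw [mul_comm (eP x) (eP y), mul_comm (eP s) (eP x), mul_comm (eP y) (eP s)]
      exact cancel3 (eP y) (eP x) (eP s)

  · exact ne_one_right _ (swap_mul_swap_ne_one hsx hsy hxy)

lemma square (f : Fin n → Multiplicative (ZMod 2)) (σ : Equiv.Perm (Fin n))
    (hσ : σ * σ = 1)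
    (hf : f * permMulAut (Multiplicative (ZMod 2)) n σ f = 1) :
    (⟨f, σ⟩ : Wreath2 n) * ⟨f, σ⟩ = 1 := by
  have h : (⟨f, σ⟩ : Wreath2 n) * ⟨f, σ⟩
      = ⟨f * permMulAut (Multiplicative (ZMod 2)) n σ f, σ * σ⟩ := rfl
  rw [h, hσ, hf]
  rfl

lemma orderOf_cb_share (s x y : Fin n) (hsx : s ≠ x) (hsy : s ≠ y) (hxy : x ≠ y) :
    orderOf (cPoint n s x * bPoint n s y) = 3 := by
  have hprod : cPoint n s x * bPoint n s y
      = (⟨eP s * eP x, Equiv.swap s x * Equiv.swap s y⟩ : Wreath2 n) := by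
    ext <;> simp [cPoint_left, cPoint_right, bPoint_left, bPoint_right, map_one]
  rw [hprod]
  apply order3'
  · apply cube
    · exact swap3 s x y hsx hsy hxy
    · simp only [map_mul, MulAut.mul_apply, permMulAut_eP, Equiv.swap_apply_left,
        Equiv.swap_apply_right, Equiv.swap_apply_of_ne_of_ne (Ne.symm hsy) (Ne.symm hxy),
        Equiv.swap_apply_of_ne_of_ne (Ne.symm hsx) hxy]
      -- (eP s * eP x) * (eP y * eP s) * (eP x * eP y) = 1
      rw [mul_comm (eP s) (eP x), mul_comm (eP y) (eP s), mul_comm (eP x) (eP y)]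
      exact cancel3 (eP x) (eP s) (eP y)
  · exact ne_one_right _ (swap_mul_swap_ne_one hsx hsy hxy)

lemma orderOf_cc_share (s x y : Fin n) (hsx : s ≠ x) (hsy : s ≠ y) (hxy : x ≠ y) :
    orderOf (cPoint n s x * cPoint n s y) = 3 := by
  have hprod : cPoint n s x * cPoint n s y
      = (⟨eP s * eP y, Equiv.swap s x * Equiv.swap s y⟩ : Wreath2 n) := by
    ext
    · simp only [SemidirectProduct.mul_left, cPoint_left, cPoint_right, map_mul, permMulAut_eP,
        Equiv.swap_apply_left, Equiv.swap_apply_of_ne_of_ne (Ne.symm hsy) (Ne.symm hxy)]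
      rw [mul_assoc, sq1' (eP x)]
    · simp [cPoint_right]
  rw [hprod]
  apply order3'
  · apply cube
    · exact swap3 s x y hsx hsy hxy
    · simp only [map_mul, MulAut.mul_apply, permMulAut_eP, Equiv.swap_apply_left,
        Equiv.swap_apply_right, Equiv.swap_apply_of_ne_of_ne (Ne.symm hsy) (Ne.symm hxy),
        Equiv.swap_apply_of_ne_of_ne (Ne.symm hsx) hxy]
      -- (eP s * eP y) * (eP y * eP x) * (eP x * eP s) = 1
      exact cancel3 (eP s) (eP y) (eP x)
  · exact ne_one_right _ (swap_mul_swap_ne_one hsx hsy hxy)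

section Disjoint
variable {a b c d : Fin n}

lemma swap_disj_sq (hac : a ≠ c) (had : a ≠ d) (hbc : b ≠ c) (hbd : b ≠ d) :
    (Equiv.swap a b * Equiv.swap c d) * (Equiv.swap a b * Equiv.swap c d) = 1 := by
  have hcomm : Commute (Equiv.swap a b) (Equiv.swap c d) := by
    apply Equiv.Perm.Disjoint.commute
    intro z
    by_cases h1 : z = a
    · subst h1; exact Or.inr (Equiv.swap_apply_of_ne_of_ne hac had)
    by_cases h2 : z = b
    · subst h2; exact Or.inr (Equiv.swap_apply_of_ne_of_ne hbc hbd)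
    · exact Or.inl (Equiv.swap_apply_of_ne_of_ne h1 h2)
  calc (Equiv.swap a b * Equiv.swap c d) * (Equiv.swap a b * Equiv.swap c d)
      = Equiv.swap a b * (Equiv.swap c d * Equiv.swap a b) * Equiv.swap c d := by group
    _ = Equiv.swap a b * (Equiv.swap a b * Equiv.swap c d) * Equiv.swap c d := by
        rw [hcomm.eq]
    _ = (Equiv.swap a b * Equiv.swap a b) * (Equiv.swap c d * Equiv.swap c d) := by group
    _ = 1 := by rw [Equiv.swap_mul_self, Equiv.swap_mul_self, one_mul]

lemma swap_disj_ne_one (hab : a ≠ b) (hac : a ≠ c) (had : a ≠ d) :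
    Equiv.swap a b * Equiv.swap c d ≠ 1 := by
  intro h
  have := congrArg (fun e : Equiv.Perm (Fin n) => e a) h
  simp only [Equiv.Perm.mul_apply, Equiv.Perm.one_apply,
    Equiv.swap_apply_of_ne_of_ne hac had, Equiv.swap_apply_left] at this
  exact hab this.symm

lemma orderOf_bb_disj (hab : a ≠ b) (hcd : c ≠ d) (hac : a ≠ c) (had : a ≠ d)
    (hbc : b ≠ c) (hbd : b ≠ d) :
    orderOf (bPoint n a b * bPoint n c d) = 2 := by
  have hprod : bPoint n a b * bPoint n c d
      = (⟨1, Equiv.swap a b * Equiv.swap c d⟩ : Wreath2 n) := by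
    ext <;> simp [bPoint, map_one]
  rw [hprod]
  apply order2'
  · exact square _ _ (swap_disj_sq hac had hbc hbd) (by simp)
  · exact ne_one_right _ (swap_disj_ne_one hab hac had)

lemma orderOf_bc_disj (hab : a ≠ b) (hcd : c ≠ d) (hac : a ≠ c) (had : a ≠ d)
    (hbc : b ≠ c) (hbd : b ≠ d) :
    orderOf (bPoint n a b * cPoint n c d) = 2 := by
  have hprod : bPoint n a b * cPoint n c d
      = (⟨eP c * eP d, Equiv.swap a b * Equiv.swap c d⟩ : Wreath2 n) := by
    ext
    · simp only [SemidirectProduct.mul_left, bPoint_left, bPoint_right, cPoint_left, map_mul,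
        permMulAut_eP, one_mul, Equiv.swap_apply_of_ne_of_ne (Ne.symm hac) (Ne.symm hbc),
        Equiv.swap_apply_of_ne_of_ne (Ne.symm had) (Ne.symm hbd)]
    · simp [bPoint_right, cPoint_right]
  rw [hprod]
  apply order2'
  · apply square _ _ (swap_disj_sq hac had hbc hbd)
    simp only [map_mul, MulAut.mul_apply, permMulAut_eP,
      Equiv.swap_apply_of_ne_of_ne (Ne.symm hac) (Ne.symm hbc),
      Equiv.swap_apply_of_ne_of_ne (Ne.symm had) (Ne.symm hbd),
      Equiv.swap_apply_left, Equiv.swap_apply_right]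
    -- (eP c * eP d) * (eP d * eP c) = 1
    rw [mul_comm (eP d) (eP c), sq1]
  · exact ne_one_right _ (swap_disj_ne_one hab hac had)

lemma orderOf_cb_disj (hab : a ≠ b) (hcd : c ≠ d) (hac : a ≠ c) (had : a ≠ d)
    (hbc : b ≠ c) (hbd : b ≠ d) :
    orderOf (cPoint n a b * bPoint n c d) = 2 := by
  have hprod : cPoint n a b * bPoint n c d
      = (⟨eP a * eP b, Equiv.swap a b * Equiv.swap c d⟩ : Wreath2 n) := by
    ext <;> simp [cPoint_left, cPoint_right, bPoint_left, bPoint_right, map_one]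
  rw [hprod]
  apply order2'
  · apply square _ _ (swap_disj_sq hac had hbc hbd)
    simp only [map_mul, MulAut.mul_apply, permMulAut_eP,
      Equiv.swap_apply_of_ne_of_ne hac had, Equiv.swap_apply_of_ne_of_ne hbc hbd,
      Equiv.swap_apply_left, Equiv.swap_apply_right]
    -- (eP a * eP b) * (eP b * eP a) = 1
    rw [mul_comm (eP b) (eP a), sq1]
  · exact ne_one_right _ (swap_disj_ne_one hab hac had)

lemma orderOf_cc_disj (hab : a ≠ b) (hcd : c ≠ d) (hac : a ≠ c) (had : a ≠ d)
    (hbc : b ≠ c) (hbd : b ≠ d) :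
    orderOf (cPoint n a b * cPoint n c d) = 2 := by
  have hprod : cPoint n a b * cPoint n c d
      = (⟨eP a * eP b * (eP c * eP d), Equiv.swap a b * Equiv.swap c d⟩ : Wreath2 n) := by
    ext
    · simp only [SemidirectProduct.mul_left, cPoint_left, cPoint_right, map_mul, permMulAut_eP,
        Equiv.swap_apply_of_ne_of_ne (Ne.symm hac) (Ne.symm hbc),
        Equiv.swap_apply_of_ne_of_ne (Ne.symm had) (Ne.symm hbd)]
    · simp [cPoint_right]
  rw [hprod]
  apply order2'
  · apply square _ _ (swap_disj_sq hac had hbc hbd)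
    simp only [map_mul, MulAut.mul_apply, permMulAut_eP,
      Equiv.swap_apply_of_ne_of_ne hac had, Equiv.swap_apply_of_ne_of_ne hbc hbd,
      Equiv.swap_apply_of_ne_of_ne (Ne.symm hac) (Ne.symm hbc),
      Equiv.swap_apply_of_ne_of_ne (Ne.symm had) (Ne.symm hbd),
      Equiv.swap_apply_left, Equiv.swap_apply_right]
    -- (eP a * eP b * (eP c * eP d)) * (eP b * eP a * (eP d * eP c)) = 1
    rw [mul_comm (eP b) (eP a), mul_comm (eP d) (eP c), sq1]
  · exact ne_one_right _ (swap_disj_ne_one hab hac had)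

end Disjoint

def ptP (n : ℕ) (t : Bool) (a b : Fin n) : Wreath2 n :=
  if t then bPoint n a b else cPoint n a b

lemma ptP_true (n : ℕ) (a b : Fin n) : ptP n true a b = bPoint n a b := rfl
lemma ptP_false (n : ℕ) (a b : Fin n) : ptP n false a b = cPoint n a b := rfl

lemma bPoint_eq_ptP (n : ℕ) (a b : Fin n) : bPoint n a b = ptP n true a b := rfl
lemma cPoint_eq_ptP (n : ℕ) (a b : Fin n) : cPoint n a b = ptP n false a b := rfl

lemma ptP_symm (n : ℕ) (t : Bool) (a b : Fin n) : ptP n t a b = ptP n t b a := by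
  cases t <;> simp only [ptP_true, ptP_false] <;>
    [exact cPoint_symm a b; exact bPoint_symm a b]

lemma ptP_mem (t : Bool) (a b : Fin n) (h : a ≠ b) : ptP n t a b ∈ DWr2 n := by
  cases t
  · exact ⟨a, b, h, Or.inr rfl⟩
  · exact ⟨a, b, h, Or.inl rfl⟩

lemma wr2_master {F : Type*} [Field F]
    {M : Type*} [AddCommGroup M] [Module F M] (ι : Wreath2 n → M)
    (B : M →ₗ[F] M →ₗ[F] F)
    (hB1 : ∀ x ∈ DWr2 n, B (ι x) (ι x) = 1)
    (hB2 : ∀ x ∈ DWr2 n, ∀ y ∈ DWr2 n, orderOf (x * y) = 2 → B (ι x) (ι y) = 0)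
    (hB3 : ∀ x ∈ DWr2 n, ∀ y ∈ DWr2 n, orderOf (x * y) = 3 → B (ι x) (ι y) = 1 / 4)
    (t t' : Bool) (u v a b : Fin n) (huv : u ≠ v) (hab : a ≠ b) :
    B (ι (ptP n t u v)) (ι (ptP n t' a b)) =
      if (a = u ∧ b = v) ∨ (a = v ∧ b = u) then (if t = t' then (1 : F) else 0)
      else if a = u ∨ a = v ∨ b = u ∨ b = v then 1 / 4 else 0 := by
  have same : ∀ (t t' : Bool) (u v : Fin n), u ≠ v →
      B (ι (ptP n t u v)) (ι (ptP n t' u v)) = if t = t' then (1 : F) else 0 := by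
    intro t t' u v h
    cases t <;> cases t' <;> simp only [ptP_true, ptP_false] <;> norm_num
    · exact hB1 _ (ptP_mem false u v h)
    · exact hB2 _ (ptP_mem false u v h) _ (ptP_mem true u v h) (orderOf_cb_same u v h)
    · exact hB2 _ (ptP_mem true u v h) _ (ptP_mem false u v h) (orderOf_bc_same u v h)
    · exact hB1 _ (ptP_mem true u v h)
  have share : ∀ (t t' : Bool) (s x y : Fin n), s ≠ x → s ≠ y → x ≠ y →
      B (ι (ptP n t s x)) (ι (ptP n t' s y)) = (1 / 4 : F) := by
    intro t t' s x y h1 h2 h3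
    cases t <;> cases t' <;> simp only [ptP_true, ptP_false]
    · exact hB3 _ (ptP_mem false s x h1) _ (ptP_mem false s y h2) (orderOf_cc_share s x y h1 h2 h3)
    · exact hB3 _ (ptP_mem false s x h1) _ (ptP_mem true s y h2) (orderOf_cb_share s x y h1 h2 h3)
    · exact hB3 _ (ptP_mem true s x h1) _ (ptP_mem false s y h2) (orderOf_bc_share s x y h1 h2 h3)
    · exact hB3 _ (ptP_mem true s x h1) _ (ptP_mem true s y h2) (orderOf_bb_share s x y h1 h2 h3)
  have disj : ∀ (t t' : Bool) (p q r w : Fin n), p ≠ q → r ≠ w → p ≠ r → p ≠ w → q ≠ r → q ≠ w →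
      B (ι (ptP n t p q)) (ι (ptP n t' r w)) = (0 : F) := by
    intro t t' p q r w h1 h2 h3 h4 h5 h6
    cases t <;> cases t' <;> simp only [ptP_true, ptP_false]
    · exact hB2 _ (ptP_mem false p q h1) _ (ptP_mem false r w h2) (orderOf_cc_disj h1 h2 h3 h4 h5 h6)
    · exact hB2 _ (ptP_mem false p q h1) _ (ptP_mem true r w h2) (orderOf_cb_disj h1 h2 h3 h4 h5 h6)
    · exact hB2 _ (ptP_mem true p q h1) _ (ptP_mem false r w h2) (orderOf_bc_disj h1 h2 h3 h4 h5 h6)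
    · exact hB2 _ (ptP_mem true p q h1) _ (ptP_mem true r w h2) (orderOf_bb_disj h1 h2 h3 h4 h5 h6)
  by_cases h1 : (a = u ∧ b = v) ∨ (a = v ∧ b = u)
  · rw [if_pos h1]
    rcases h1 with ⟨rfl, rfl⟩ | ⟨rfl, rfl⟩
    · exact same t t' a b huv
    · rw [ptP_symm n t' a b]
      exact same t t' b a huv
  rw [if_neg h1]
  by_cases h2 : a = u ∨ a = v ∨ b = u ∨ b = v
  case pos =>
    rw [if_pos h2]
    rcases h2 with rfl | rfl | rfl | rfl
    · exact share t t' a v b huv hab (fun h => h1 (Or.inl ⟨rfl, h.symm⟩))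
    · rw [ptP_symm n t u a]
      exact share t t' a u b (Ne.symm huv) hab (fun h => h1 (Or.inr ⟨rfl, h.symm⟩))
    · rw [ptP_symm n t' a b]
      exact share t t' b v a huv (Ne.symm hab) (fun h => h1 (Or.inr ⟨h.symm, rfl⟩))
    · rw [ptP_symm n t u b, ptP_symm n t' a b]
      exact share t t' b u a (Ne.symm huv) (Ne.symm hab) (fun h => h1 (Or.inl ⟨h.symm, rfl⟩))
  case neg =>
    rw [if_neg h2]
    push_neg at h2
    obtain ⟨h3, h4, h5, h6⟩ := h2
    exact disj t t' u v a b huv hab (Ne.symm h3) (Ne.symm h5) (Ne.symm h4) (Ne.symm h6)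

/-- Let `n ≥ 4` and consider the 3-transposition group `Wr(2,n)` with
class `D = {b_{i,j}} ∪ {c_{i,j}}`. Then, for distinct `i, j, k, l` with `i` minimal,
the element `r(i,j)(k,l) = b_{i,j} - b_{i,l} - b_{j,k} + b_{k,l} + c_{i,j} - c_{i,l}
- c_{j,k} + c_{k,l}` of the Matsuo algebra `M_{1/2}(Wr(2,n), D)` (over a field `F` of
characteristic 0, with basis `D` spanning `M` and Frobenius form `B` with values
`1`, `0`, `1/4` according to the order of the product) lies in the radical of the
Frobenius form. -/
theorem statement13 (F : Type*) [Field F] [CharZero F]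
    (n : ℕ) (hn : 4 ≤ n)
    (M : Type*) [AddCommGroup M] [Module F M] (ι : Wreath2 n → M)
    (hspan : Submodule.span F (ι '' DWr2 n) = ⊤)
    (B : M →ₗ[F] M →ₗ[F] F)
    (hB1 : ∀ x ∈ DWr2 n, B (ι x) (ι x) = 1)
    (hB2 : ∀ x ∈ DWr2 n, ∀ y ∈ DWr2 n, orderOf (x * y) = 2 → B (ι x) (ι y) = 0)
    (hB3 : ∀ x ∈ DWr2 n, ∀ y ∈ DWr2 n, orderOf (x * y) = 3 → B (ι x) (ι y) = 1 / 4)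
    (i j k l : Fin n)
    (hij : i ≠ j) (hik : i ≠ k) (hil : i ≠ l) (hjk : j ≠ k) (hjl : j ≠ l)
    (hkl : k ≠ l) (hmin : i < j ∧ i < k ∧ i < l) :
    ∀ v : M,
      B (ι (bPoint n i j) - ι (bPoint n i l) - ι (bPoint n j k) + ι (bPoint n k l)
          + (ι (cPoint n i j) - ι (cPoint n i l) - ι (cPoint n j k)
              + ι (cPoint n k l))) v = 0 := by
  intro v
  have hM := wr2_master ι B hB1 hB2 hB3
  have hkey : ∀ (a b : Fin n), a ≠ b → ∀ s : Bool,
      B (ι (bPoint n i j) - ι (bPoint n i l) - ι (bPoint n j k) + ι (bPoint n k l)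
          + (ι (cPoint n i j) - ι (cPoint n i l) - ι (cPoint n j k)
              + ι (cPoint n k l))) (ι (ptP n s a b)) = 0 := by
    intro a b hab s
    simp only [map_add, map_sub, LinearMap.add_apply, LinearMap.sub_apply,
      bPoint_eq_ptP, cPoint_eq_ptP]
    rcases eq_or_ne a i with rfl | hai
    · rcases eq_or_ne b j with rfl | hbj
      · cases s <;>
          simp [hM, hab, Ne.symm hab, hij, hik, hil, hjk, hjl, hkl, Ne.symm hij, Ne.symm hik, Ne.symm hil, Ne.symm hjk, Ne.symm hjl, Ne.symm hkl] <;>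
          norm_num
      rcases eq_or_ne b k with rfl | hbk
      · cases s <;>
          simp [hM, hab, Ne.symm hab, hij, hik, hil, hjk, hjl, hkl, Ne.symm hij, Ne.symm hik, Ne.symm hil, Ne.symm hjk, Ne.symm hjl, Ne.symm hkl, hbj] <;>
          norm_num
      rcases eq_or_ne b l with rfl | hbl
      · cases s <;>
          simp [hM, hab, Ne.symm hab, hij, hik, hil, hjk, hjl, hkl, Ne.symm hij, Ne.symm hik, Ne.symm hil, Ne.symm hjk, Ne.symm hjl, Ne.symm hkl, hbj, hbk] <;>
          norm_num
      cases s <;>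
        simp [hM, hab, Ne.symm hab, hij, hik, hil, hjk, hjl, hkl, Ne.symm hij, Ne.symm hik, Ne.symm hil, Ne.symm hjk, Ne.symm hjl, Ne.symm hkl, hbj, hbk, hbl] <;>
        norm_num
    rcases eq_or_ne a j with rfl | haj
    · rcases eq_or_ne b i with rfl | hbi
      · cases s <;>
          simp [hM, hab, Ne.symm hab, hij, hik, hil, hjk, hjl, hkl, Ne.symm hij, Ne.symm hik, Ne.symm hil, Ne.symm hjk, Ne.symm hjl, Ne.symm hkl] <;>
          norm_num
      rcases eq_or_ne b k with rfl | hbk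
      · cases s <;>
          simp [hM, hab, Ne.symm hab, hij, hik, hil, hjk, hjl, hkl, Ne.symm hij, Ne.symm hik, Ne.symm hil, Ne.symm hjk, Ne.symm hjl, Ne.symm hkl, hbi] <;>
          norm_num
      rcases eq_or_ne b l with rfl | hbl
      · cases s <;>
          simp [hM, hab, Ne.symm hab, hij, hik, hil, hjk, hjl, hkl, Ne.symm hij, Ne.symm hik, Ne.symm hil, Ne.symm hjk, Ne.symm hjl, Ne.symm hkl, hbi, hbk] <;>
          norm_num
      cases s <;>
        simp [hM, hab, Ne.symm hab, hij, hik, hil, hjk, hjl, hkl, Ne.symm hij, Ne.symm hik, Ne.symm hil, Ne.symm hjk, Ne.symm hjl, Ne.symm hkl, hbi, hbk, hbl] <;>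
        norm_num
    rcases eq_or_ne a k with rfl | hak
    · rcases eq_or_ne b i with rfl | hbi
      · cases s <;>
          simp [hM, hab, Ne.symm hab, hij, hik, hil, hjk, hjl, hkl, Ne.symm hij, Ne.symm hik, Ne.symm hil, Ne.symm hjk, Ne.symm hjl, Ne.symm hkl] <;>
          norm_num
      rcases eq_or_ne b j with rfl | hbj
      · cases s <;>
          simp [hM, hab, Ne.symm hab, hij, hik, hil, hjk, hjl, hkl, Ne.symm hij, Ne.symm hik, Ne.symm hil, Ne.symm hjk, Ne.symm hjl, Ne.symm hkl, hbi] <;>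
          norm_num
      rcases eq_or_ne b l with rfl | hbl
      · cases s <;>
          simp [hM, hab, Ne.symm hab, hij, hik, hil, hjk, hjl, hkl, Ne.symm hij, Ne.symm hik, Ne.symm hil, Ne.symm hjk, Ne.symm hjl, Ne.symm hkl, hbi, hbj] <;>
          norm_num
      cases s <;>
        simp [hM, hab, Ne.symm hab, hij, hik, hil, hjk, hjl, hkl, Ne.symm hij, Ne.symm hik, Ne.symm hil, Ne.symm hjk, Ne.symm hjl, Ne.symm hkl, hbi, hbj, hbl] <;>
        norm_num
    rcases eq_or_ne a l with rfl | hal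
    · rcases eq_or_ne b i with rfl | hbi
      · cases s <;>
          simp [hM, hab, Ne.symm hab, hij, hik, hil, hjk, hjl, hkl, Ne.symm hij, Ne.symm hik, Ne.symm hil, Ne.symm hjk, Ne.symm hjl, Ne.symm hkl] <;>
          norm_num
      rcases eq_or_ne b j with rfl | hbj
      · cases s <;>
          simp [hM, hab, Ne.symm hab, hij, hik, hil, hjk, hjl, hkl, Ne.symm hij, Ne.symm hik, Ne.symm hil, Ne.symm hjk, Ne.symm hjl, Ne.symm hkl, hbi] <;>
          norm_num
      rcases eq_or_ne b k with rfl | hbk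
      · cases s <;>
          simp [hM, hab, Ne.symm hab, hij, hik, hil, hjk, hjl, hkl, Ne.symm hij, Ne.symm hik, Ne.symm hil, Ne.symm hjk, Ne.symm hjl, Ne.symm hkl, hbi, hbj] <;>
          norm_num
      cases s <;>
        simp [hM, hab, Ne.symm hab, hij, hik, hil, hjk, hjl, hkl, Ne.symm hij, Ne.symm hik, Ne.symm hil, Ne.symm hjk, Ne.symm hjl, Ne.symm hkl, hbi, hbj, hbk] <;>
        norm_num
    rcases eq_or_ne b i with rfl | hbi
    · cases s <;>
        simp [hM, hab, Ne.symm hab, hij, hik, hil, hjk, hjl, hkl, Ne.symm hij, Ne.symm hik, Ne.symm hil, Ne.symm hjk, Ne.symm hjl, Ne.symm hkl, hai, haj, hak, hal] <;>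
        norm_num
    rcases eq_or_ne b j with rfl | hbj
    · cases s <;>
        simp [hM, hab, Ne.symm hab, hij, hik, hil, hjk, hjl, hkl, Ne.symm hij, Ne.symm hik, Ne.symm hil, Ne.symm hjk, Ne.symm hjl, Ne.symm hkl, hai, haj, hak, hal, hbi] <;>
        norm_num
    rcases eq_or_ne b k with rfl | hbk
    · cases s <;>
        simp [hM, hab, Ne.symm hab, hij, hik, hil, hjk, hjl, hkl, Ne.symm hij, Ne.symm hik, Ne.symm hil, Ne.symm hjk, Ne.symm hjl, Ne.symm hkl, hai, haj, hak, hal, hbi, hbj] <;>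
        norm_num
    rcases eq_or_ne b l with rfl | hbl
    · cases s <;>
        simp [hM, hab, Ne.symm hab, hij, hik, hil, hjk, hjl, hkl, Ne.symm hij, Ne.symm hik, Ne.symm hil, Ne.symm hjk, Ne.symm hjl, Ne.symm hkl, hai, haj, hak, hal, hbi, hbj, hbk] <;>
        norm_num
    cases s <;>
      simp [hM, hab, Ne.symm hab, hij, hik, hil, hjk, hjl, hkl, Ne.symm hij, Ne.symm hik, Ne.symm hil, Ne.symm hjk, Ne.symm hjl, Ne.symm hkl, hai, haj, hak, hal, hbi, hbj, hbk, hbl] <;>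
      norm_num
  have h0 : ∀ x ∈ DWr2 n,
      B (ι (bPoint n i j) - ι (bPoint n i l) - ι (bPoint n j k) + ι (bPoint n k l)
          + (ι (cPoint n i j) - ι (cPoint n i l) - ι (cPoint n j k)
              + ι (cPoint n k l))) (ι x) = 0 := by
    rintro x ⟨a, b, hab, rfl | rfl⟩
    · exact hkey a b hab true
    · exact hkey a b hab false
  have hle : Submodule.span F (ι '' DWr2 n) ≤
      LinearMap.ker (B (ι (bPoint n i j) - ι (bPoint n i l) - ι (bPoint n j k)
        + ι (bPoint n k l)
        + (ι (cPoint n i j) - ι (cPoint n i l) - ι (cPoint n j k) + ι (cPoint n k l)))) := by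
    rw [Submodule.span_le]
    rintro _ ⟨x, hx, rfl⟩
    exact LinearMap.mem_ker.mpr (h0 x hx)
  have hv : v ∈ Submodule.span F (ι '' DWr2 n) := by rw [hspan]; trivial
  exact LinearMap.mem_ker.mp (hle hv)
end

section
/- Let n ≥ 4. In the Matsuo algebra M = M_{1/2}(Wr(2,n), D) over a field of characteristic 0, the set {r(i,j)(n-1,n) : 1 ≤ i < j < n-1} ∪ {r(1,n-1)(i,n) : i ≠ 1, n-1, n} is linearly independent and has cardinality n(n-3)/2, where r(i,j)(k,l) = b_{i,j} - b_{i,l} - b_{j,k} + b_{k,l} + c_{i,j} - c_{i,l} - c_{j,k} + c_{k,l}. -/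
/-- The radical element
`r(i,j)(k,l) = b_{i,j} - b_{i,l} - b_{j,k} + b_{k,l} + c_{i,j} - c_{i,l} - c_{j,k} + c_{k,l}`
of the Matsuo algebra `M_{1/2}(Wr(2,n), D)`, written in the basis `D` via `ι`. -/
def rVec (F : Type*) [Field F] (n : ℕ) (M : Type*) [AddCommGroup M] [Module F M]
    (ι : Wreath2 n → M) (i j k l : Fin n) : M :=
  ι (bPoint n i j) - ι (bPoint n i l) - ι (bPoint n j k) + ι (bPoint n k l)
    + (ι (cPoint n i j) - ι (cPoint n i l) - ι (cPoint n j k) + ι (cPoint n k l))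

/-!
Each `r(i,j)(n-1,n)` has coordinate `1` at `b_{i,j}`, and every other vector of the family has
coordinate `0` there, because its remaining terms involve `n-1` or `n`. Likewise `r(1,n-1)(i,n)`
has coordinate `δ_{i,i'}` at `b_{i',n}`. Against these coordinate functionals the family is
therefore block unitriangular, hence independent. The coordinates are read off in the free module
on `Wr(2,n)`; linear independence of `D` says exactly that the elements supported on `D` map
injectively into `M`. The count is `binom(n-2, 2) + (n-3) = n(n-3)/2`.
-/

open Finsupp

section BlockTriangular

variable {R M ι κ : Type*} [Ring R] [AddCommGroup M] [Module R M]
  [Fintype ι] [Fintype κ] [DecidableEq ι] [DecidableEq κ]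

theorem linearIndependent_sumElim_of_blockTriangular {v : ι → M} {w : κ → M}
    (f : ι → M →ₗ[R] R) (g : κ → M →ₗ[R] R)
    (hfv : ∀ s t, f t (v s) = if s = t then 1 else 0) (hfw : ∀ s t, f t (w s) = 0)
    (hgw : ∀ s t, g t (w s) = if s = t then 1 else 0) :
    LinearIndependent R (Sum.elim v w) := by
  rw [Fintype.linearIndependent_iff]
  intro c hc
  have hcv : ∀ t, c (.inl t) = 0 := fun t => by
    simpa [Fintype.sum_sum_type, hfv, hfw] using congrArg (f t) hc
  have hcw : ∀ t, c (.inr t) = 0 := fun t => by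
    simpa [Fintype.sum_sum_type, hgw, hcv] using congrArg (g t) hc
  rintro (t | t)
  exacts [hcv t, hcw t]

end BlockTriangular

theorem LinearIndependent.linearCombination_comp_of_supported {R M α ι : Type*} [Ring R]
    [AddCommGroup M] [Module R M] {v : α → M} {s : Set α} {u : ι → α →₀ R}
    (hu : LinearIndependent R u) (hus : ∀ i, u i ∈ supported R R s) (hv : LinearIndepOn R v s) :
    LinearIndependent R (linearCombination R v ∘ u) :=
  hu.map <| (linearIndepOn_iff_disjoint.mp hv).mono_left
    (Submodule.span_le.mpr (Set.range_subset_iff.mpr hus))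

theorem Equiv.swap_eq_swap_iff {α : Type*} [DecidableEq α] {i j k l : α} (hkl : k ≠ l) :
    swap i j = swap k l ↔ (i = k ∧ j = l) ∨ (i = l ∧ j = k) := by
  constructor
  · intro h
    have hk : swap i j k = l := by rw [h, swap_apply_left]
    have hl : swap i j l = k := by rw [h, swap_apply_right]
    grind
  · rintro (⟨rfl, rfl⟩ | ⟨rfl, rfl⟩)
    exacts [rfl, swap_comm _ _]

namespace Wreath2

variable {n : ℕ}

theorem bPoint_eq_bPoint_iff {i j k l : Fin n} (hkl : k ≠ l) :
    bPoint n i j = bPoint n k l ↔ (i = k ∧ j = l) ∨ (i = l ∧ j = k) := by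
  rw [bPoint, bPoint, SemidirectProduct.inr_injective.eq_iff, Equiv.swap_eq_swap_iff hkl]

theorem cPoint_ne_bPoint {i j k l : Fin n} (hkl : k ≠ l) : cPoint n i j ≠ bPoint n k l := by
  intro h
  have hright : Equiv.swap i j = Equiv.swap k l := by
    simpa [cPoint, bPoint] using congrArg SemidirectProduct.right h
  have hij : i ≠ j := by
    rintro rfl
    exact hkl (Equiv.swap_eq_one_iff.mp (by simpa using hright.symm))
  have hleft := congrFun (congrArg SemidirectProduct.left h) i
  simp [cPoint, bPoint, Pi.mulSingle_eq_of_ne hij] at hleft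

end Wreath2

section Coordinates

variable {F : Type*} [Field F] {n : ℕ}

variable (F) in
noncomputable def rFinsupp (i j k l : Fin n) : Wreath2 n →₀ F :=
  rVec F n (Wreath2 n →₀ F) (fun x => single x 1) i j k l

theorem rFinsupp_mem_supported {i j k l : Fin n} (hij : i ≠ j) (hil : i ≠ l) (hjk : j ≠ k)
    (hkl : k ≠ l) : rFinsupp F i j k l ∈ supported F F (DWr2 n) := by
  have hb : ∀ {x y : Fin n}, x ≠ y → single (bPoint n x y) (1 : F) ∈ supported F F (DWr2 n) :=
    fun h => single_mem_supported F 1 ⟨_, _, h, .inl rfl⟩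
  have hc : ∀ {x y : Fin n}, x ≠ y → single (cPoint n x y) (1 : F) ∈ supported F F (DWr2 n) :=
    fun h => single_mem_supported F 1 ⟨_, _, h, .inr rfl⟩
  exact add_mem (add_mem (sub_mem (sub_mem (hb hij) (hb hil)) (hb hjk)) (hb hkl))
    (add_mem (sub_mem (sub_mem (hc hij) (hc hil)) (hc hjk)) (hc hkl))

theorem rFinsupp_apply_bPoint {s t : Fin n} (hst : s ≠ t) (i j k l : Fin n) :
    rFinsupp F i j k l (bPoint n s t) =
      (if bPoint n i j = bPoint n s t then 1 else 0) - (if bPoint n i l = bPoint n s t then 1 else 0)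
        - (if bPoint n j k = bPoint n s t then 1 else 0)
        + (if bPoint n k l = bPoint n s t then 1 else 0) := by
  simp [rFinsupp, rVec, single_apply, Wreath2.cPoint_ne_bPoint hst]

abbrev LowerPairs (p : Fin n) := {x : Fin n × Fin n // x.1 < x.2 ∧ x.2 < p}

abbrev Outside (a p q : Fin n) := {i : Fin n // i ≠ a ∧ i ≠ p ∧ i ≠ q}

variable {a p q : Fin n}

theorem rFinsupp_lowerPair_apply_lowerPair (hpq : p < q) (s t : LowerPairs p) :
    rFinsupp F s.1.1 s.1.2 p q (bPoint n t.1.1 t.1.2) = if s = t then 1 else 0 := by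
  obtain ⟨⟨i, j⟩, hij, hjp⟩ := s
  obtain ⟨⟨k, l⟩, hkl, hlp⟩ := t
  simp only at hij hjp hkl hlp
  rw [rFinsupp_apply_bPoint hkl.ne]
  simp only [Wreath2.bPoint_eq_bPoint_iff hkl.ne, Subtype.mk.injEq, Prod.mk.injEq]
  grind

theorem rFinsupp_outside_apply_lowerPair (hpq : p < q) (s : Outside a p q) (t : LowerPairs p) :
    rFinsupp F a p s q (bPoint n t.1.1 t.1.2) = 0 := by
  obtain ⟨i, hia, hip, hiq⟩ := s
  obtain ⟨⟨k, l⟩, hkl, hlp⟩ := t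
  simp only at hkl hlp
  rw [rFinsupp_apply_bPoint hkl.ne]
  simp only [Wreath2.bPoint_eq_bPoint_iff hkl.ne]
  grind

theorem rFinsupp_outside_apply_outside (haq : a ≠ q) (hpq : p ≠ q) (s t : Outside a p q) :
    rFinsupp F a p s q (bPoint n t q) = if s = t then 1 else 0 := by
  obtain ⟨i, hia, hip, hiq⟩ := s
  obtain ⟨k, hka, hkp, hkq⟩ := t
  rw [rFinsupp_apply_bPoint hkq]
  simp only [Wreath2.bPoint_eq_bPoint_iff hkq, Subtype.mk.injEq]
  grind

end Coordinates

noncomputable def radicalFamily (F : Type*) [Field F] {n : ℕ} (M : Type*) [AddCommGroup M]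
    [Module F M] (ι : Wreath2 n → M) (a p q : Fin n) : LowerPairs p ⊕ Outside a p q → M :=
  Sum.elim (fun s => rVec F n M ι s.1.1 s.1.2 p q) (fun s => rVec F n M ι a p s q)

section RadicalFamily

variable {F : Type*} [Field F] {n : ℕ} {a p q : Fin n} {M : Type*} [AddCommGroup M]
  [Module F M] {ι : Wreath2 n → M}

theorem linearIndependent_radicalFamily_single (haq : a ≠ q) (hpq : p < q) :
    LinearIndependent F (radicalFamily F (Wreath2 n →₀ F) (single · 1) a p q) :=
  linearIndependent_sumElim_of_blockTriangular
    (fun t => lapply (bPoint n t.1.1 t.1.2)) (fun t => lapply (bPoint n t q))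
    (rFinsupp_lowerPair_apply_lowerPair hpq) (rFinsupp_outside_apply_lowerPair hpq)
    (rFinsupp_outside_apply_outside haq hpq.ne)

theorem radicalFamily_single_mem_supported (hap : a ≠ p) (haq : a ≠ q) (hpq : p < q)
    (s : LowerPairs p ⊕ Outside a p q) :
    radicalFamily F (Wreath2 n →₀ F) (single · 1) a p q s ∈ supported F F (DWr2 n) := by
  rcases s with ⟨⟨i, j⟩, hij, hjp⟩ | ⟨i, hia, hip, hiq⟩
  · exact rFinsupp_mem_supported hij.ne (hij.trans (hjp.trans hpq)).ne hjp.ne hpq.ne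
  · exact rFinsupp_mem_supported hap haq (Ne.symm hip) hiq

theorem linearCombination_comp_radicalFamily_single :
    linearCombination F ι ∘ radicalFamily F (Wreath2 n →₀ F) (single · 1) a p q =
      radicalFamily F M ι a p q := by
  ext (s | s) <;> simp [radicalFamily, rVec]

theorem linearIndependent_radicalFamily (hind : LinearIndepOn F ι (DWr2 n)) (hap : a ≠ p)
    (haq : a ≠ q) (hpq : p < q) : LinearIndependent F (radicalFamily F M ι a p q) := by
  rw [← linearCombination_comp_radicalFamily_single]
  exact (linearIndependent_radicalFamily_single haq hpq).linearCombination_comp_of_supported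
    (radicalFamily_single_mem_supported hap haq hpq) hind

theorem range_radicalFamily : Set.range (radicalFamily F M ι a p q) =
    {v : M | (∃ i j : Fin n, i < j ∧ j < p ∧ v = rVec F n M ι i j p q) ∨
      (∃ i : Fin n, i ≠ a ∧ i ≠ p ∧ i ≠ q ∧ v = rVec F n M ι a p i q)} := by
  ext v
  constructor
  · rintro ⟨⟨⟨i, j⟩, hij, hjp⟩ | ⟨i, hia, hip, hiq⟩, rfl⟩
    exacts [.inl ⟨i, j, hij, hjp, rfl⟩, .inr ⟨i, hia, hip, hiq, rfl⟩]
  · rintro (⟨i, j, hij, hjp, rfl⟩ | ⟨i, hia, hip, hiq, rfl⟩)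
    exacts [⟨.inl ⟨(i, j), hij, hjp⟩, rfl⟩, ⟨.inr ⟨i, hia, hip, hiq⟩, rfl⟩]

end RadicalFamily

theorem card_lowerPairs {n : ℕ} (p : Fin n) : Fintype.card (LowerPairs p) = (p : ℕ).choose 2 := by
  rw [Fintype.card_subtype, ← Fin.card_Iio p, ← Finset.card_product_filter_lt]
  congr 1
  ext x
  simp only [Finset.mem_filter, Finset.mem_univ, true_and, Finset.mem_product, Finset.mem_Iio]
  constructor
  · rintro ⟨h12, h2p⟩
    exact ⟨⟨h12.trans h2p, h2p⟩, h12⟩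
  · rintro ⟨⟨-, h2p⟩, h12⟩
    exact ⟨h12, h2p⟩

theorem card_outside {n : ℕ} {a p q : Fin n} (hap : a ≠ p) (haq : a ≠ q) (hpq : p ≠ q) :
    Fintype.card (Outside a p q) = n - 3 := by
  have hcompl : Finset.univ.filter (fun i => i ≠ a ∧ i ≠ p ∧ i ≠ q) = {a, p, q}ᶜ := by
    ext i
    simp
  rw [Fintype.card_subtype, hcompl, Finset.card_compl, Fintype.card_fin,
    Finset.card_eq_three.mpr ⟨a, p, q, hap, haq, hpq, rfl⟩]

theorem Nat.choose_two_add_self (m : ℕ) : (m + 1).choose 2 + m = (m + 3) * m / 2 := by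
  rw [Nat.choose_two_right, Nat.add_sub_cancel, ← Nat.add_mul_div_right _ _ two_pos]
  congr 1
  ring

-- Indices are 0-based: `a`, `p`, `q` are the paper's `1`, `n-1`, `n`.
theorem statement14_general (F : Type*) [Field F]
    (n : ℕ) (hn : 4 ≤ n)
    (M : Type*) [AddCommGroup M] [Module F M] (ι : Wreath2 n → M)
    (hind : LinearIndependent F (fun x : DWr2 n => ι x.val))
    (a p q : Fin n) (ha : (a : ℕ) = 0) (hp : (p : ℕ) = n - 2) (hq : (q : ℕ) = n - 1)
    (S : Set M)
    (hS : S = {v : M | (∃ i j : Fin n, i < j ∧ j < p ∧ v = rVec F n M ι i j p q) ∨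
        (∃ i : Fin n, i ≠ a ∧ i ≠ p ∧ i ≠ q ∧ v = rVec F n M ι a p i q)}) :
    LinearIndependent F (Subtype.val : S → M) ∧ S.ncard = n * (n - 3) / 2 := by
  have hap : a ≠ p := fun h => by omega
  have haq : a ≠ q := fun h => by omega
  have hpq : p < q := by omega
  have hli := linearIndependent_radicalFamily hind hap haq hpq
  rw [hS, ← range_radicalFamily]
  refine ⟨hli.linearIndepOn_id, ?_⟩
  obtain ⟨m, rfl⟩ : ∃ m, n = m + 3 := ⟨n - 3, by omega⟩
  rw [Set.ncard_range_of_injective hli.injective, Nat.card_sum, Nat.card_eq_fintype_card,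
    Nat.card_eq_fintype_card, card_lowerPairs, card_outside hap haq hpq.ne, hp,
    Nat.add_sub_cancel, show m + 3 - 2 = m + 1 by omega, Nat.choose_two_add_self]

/-- Let `n ≥ 4`. In the Matsuo algebra `M = M_{1/2}(Wr(2,n), D)` over a
field of characteristic 0 (with basis `D`, here expressed by `ι` being linearly
independent on `D` and spanning `M`), the set
`{r(i,j)(n-1,n) : 1 ≤ i < j < n-1} ∪ {r(1,n-1)(i,n) : i ≠ 1, n-1, n}`
is linearly independent and has cardinality `n(n-3)/2`. (Indices are 0-based: `a`, `p`,
`q` stand for the 1-based indices `1`, `n-1`, `n`.) -/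
theorem statement14 (F : Type*) [Field F] [CharZero F]
    (n : ℕ) (hn : 4 ≤ n)
    (M : Type*) [AddCommGroup M] [Module F M] (ι : Wreath2 n → M)
    (hind : LinearIndependent F (fun x : DWr2 n => ι x.val))
    (hspan : Submodule.span F (ι '' DWr2 n) = ⊤)
    (a p q : Fin n) (ha : (a : ℕ) = 0) (hp : (p : ℕ) = n - 2) (hq : (q : ℕ) = n - 1)
    (S : Set M)
    (hS : S = {v : M | (∃ i j : Fin n, i < j ∧ j < p ∧ v = rVec F n M ι i j p q) ∨
        (∃ i : Fin n, i ≠ a ∧ i ≠ p ∧ i ≠ q ∧ v = rVec F n M ι a p i q)}) :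
    LinearIndependent F (Subtype.val : S → M) ∧ S.ncard = n * (n - 3) / 2 :=
  statement14_general F n hn M ι hind a p q ha hp hq S hS
end
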